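/- arXiv:2106.03787 — 2 statements merged into one kernel-verified Lean document; each statement's English description precedes it below -/
import Mathlib

section
/- Let μ be a probability measure on S×A satisfying the Bellman flow constraint ∑_a μ(·,a) = (1-γ)ρ₀ + γ P^⊤ μ, with state marginal ρ(s) = ∑_a μ(s,a). Define the policy π(a|s) = μ(s,a)/ρ(s) whenever ρ(s) > 0 (and arbitrary otherwise). Then the discounted occupancy measure induced by π equals μ. -/
noncomputable section
open scoped BigOperators

def IsDist {X : Type*} [Fintype X] (p : X → ℝ) : Prop :=
  (∀ x, 0 ≤ p x) ∧ ∑ x, p x = 1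

def IsPolicy {S A : Type*} [Fintype A] (π : S → A → ℝ) : Prop :=
  ∀ s, IsDist (π s)

def IsKernel {S A : Type*} [Fintype S] (P : S → A → S → ℝ) : Prop :=
  ∀ s a, IsDist (P s a)

/-- Probability of (S_t = s, A_t = a) under policy `π`, kernel `P`, initial law `ρ0`. -/
def saDist {S A : Type*} [Fintype S] [Fintype A] (P : S → A → S → ℝ) (π : S → A → ℝ)
    (ρ0 : S → ℝ) : ℕ → S → A → ℝ
  | 0 => fun s a => ρ0 s * π s a
  | (t + 1) => fun s a => π s a * ∑ s' : S, ∑ a' : A, P s' a' s * saDist P π ρ0 t s' a'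

/-- Discounted state-action occupancy measure of policy `π`. -/
def occ {S A : Type*} [Fintype S] [Fintype A] (γ : ℝ) (P : S → A → S → ℝ)
    (π : S → A → ℝ) (ρ0 : S → ℝ) (s : S) (a : A) : ℝ :=
  (1 - γ) * ∑' t : ℕ, γ ^ t * saDist P π ρ0 t s a

/-- The Bellman flow constraint set `M`. -/
def InFlow {S A : Type*} [Fintype S] [Fintype A] (γ : ℝ) (P : S → A → S → ℝ)
    (ρ0 : S → ℝ) (μ : S → A → ℝ) : Prop :=
  IsDist (fun p : S × A => μ p.1 p.2) ∧
  ∀ s, ∑ a, μ s a = (1 - γ) * ρ0 s + γ * ∑ s' : S, ∑ a' : A, P s' a' s * μ s' a'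

/-!
Write `ρ(s) = ∑ₐ μ(s,a)`, so that `μ(s,a) = π(a|s) ρ(s)`, and let `M` be the state-to-state
transition matrix of `π`. The state-action law at time `t` is `π(a|s) (ρ₀ Mᵗ)(s)`, so the
occupancy measure is `π(a|s) ∑ₜ (1-γ) γᵗ (ρ₀ Mᵗ)(s)`. The flow constraint reads
`ρ = (1-γ) ρ₀ + γ ρ M`; unrolling it `n` times gives
`ρ = ∑_{t<n} (1-γ) γᵗ ρ₀ Mᵗ + γⁿ ρ Mⁿ`, and the remainder vanishes because `ρ Mⁿ` is a
probability vector. Hence the series sums to `ρ(s)` and the occupancy measure is `μ`.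
-/

open Matrix Finset Filter Topology

section StochasticVector

variable {n : Type*} [Fintype n]

lemma IsDist.le_one {p : n → ℝ} (hp : IsDist p) (i : n) : p i ≤ 1 :=
  hp.2 ▸ single_le_sum (fun j _ => hp.1 j) (mem_univ i)

lemma IsDist.vecMul [DecidableEq n] {p : n → ℝ} (hp : IsDist p) {M : Matrix n n ℝ}
    (hM : M ∈ rowStochastic ℝ n) : IsDist (p ᵥ* M) := by
  refine ⟨nonneg_vecMul_of_mem_rowStochastic hM hp.1, ?_⟩
  have h := vecMul_dotProduct_one_eq_one_rowStochastic hM (x := p)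
    (by rw [dotProduct_one, hp.2])
  rwa [dotProduct_one] at h

lemma eq_sum_range_add_of_eq_smul_add [DecidableEq n] {R : Type*} [CommRing R]
    {M : Matrix n n R} {γ : R} {ρ ρ₀ : n → R} (hρ : ρ = (1 - γ) • ρ₀ + γ • (ρ ᵥ* M)) (N : ℕ) :
    ρ = ∑ t ∈ range N, ((1 - γ) * γ ^ t) • (ρ₀ ᵥ* M ^ t) + γ ^ N • (ρ ᵥ* M ^ N) := by
  induction N with
  | zero => simp
  | succ N ih =>
    have hstep : ρ ᵥ* M ^ N = (1 - γ) • (ρ₀ ᵥ* M ^ N) + γ • (ρ ᵥ* M ^ (N + 1)) := by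
      conv_lhs => rw [hρ]
      rw [add_vecMul, smul_vecMul, smul_vecMul, vecMul_vecMul, ← pow_succ']
    conv_lhs => rw [ih, hstep]
    rw [sum_range_succ, smul_add, smul_smul, smul_smul, ← pow_succ, mul_comm (γ ^ N), add_assoc]

lemma hasSum_of_eq_smul_add_vecMul [DecidableEq n] {M : Matrix n n ℝ}
    (hM : M ∈ rowStochastic ℝ n) {γ : ℝ} (hγ₀ : 0 ≤ γ) (hγ₁ : γ < 1) {ρ ρ₀ : n → ℝ}
    (hρ₀ : ∀ i, 0 ≤ ρ₀ i) (hρ : IsDist ρ)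
    (hfix : ρ = (1 - γ) • ρ₀ + γ • (ρ ᵥ* M)) (i : n) :
    HasSum (fun t => (1 - γ) * γ ^ t * (ρ₀ ᵥ* M ^ t) i) (ρ i) := by
  have hterm_nonneg (t : ℕ) : 0 ≤ (1 - γ) * γ ^ t * (ρ₀ ᵥ* M ^ t) i :=
    mul_nonneg (mul_nonneg (sub_nonneg.2 hγ₁.le) (pow_nonneg hγ₀ t))
      (nonneg_vecMul_of_mem_rowStochastic (pow_mem hM t) hρ₀ i)
  rw [hasSum_iff_tendsto_nat_of_nonneg hterm_nonneg]
  have hrem : Tendsto (fun N => γ ^ N * (ρ ᵥ* M ^ N) i) atTop (𝓝 0) := by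
    have hpow := tendsto_pow_atTop_nhds_zero_of_lt_one hγ₀ hγ₁
    refine squeeze_zero (fun N => ?_) (fun N => ?_) hpow
    · exact mul_nonneg (pow_nonneg hγ₀ N) ((hρ.vecMul (pow_mem hM N)).1 i)
    · exact mul_le_of_le_one_right (pow_nonneg hγ₀ N) ((hρ.vecMul (pow_mem hM N)).le_one i)
  have hpartial (N : ℕ) :
      ∑ t ∈ range N, (1 - γ) * γ ^ t * (ρ₀ ᵥ* M ^ t) i = ρ i - γ ^ N * (ρ ᵥ* M ^ N) i := by
    have h := congr_fun (eq_sum_range_add_of_eq_smul_add hfix N) i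
    simp only [Pi.add_apply, Finset.sum_apply, Pi.smul_apply, smul_eq_mul] at h
    linarith
  simpa only [hpartial, sub_zero] using hrem.const_sub (ρ i)

end StochasticVector

lemma eq_mul_sum_of_eq_div_sum {S A : Type*} [Fintype A] {μ π : S → A → ℝ}
    (hμ : ∀ s a, 0 ≤ μ s a)
    (hπ : ∀ s a, (∑ a', μ s a') ≠ 0 → π s a = μ s a / ∑ a', μ s a') (s : S) (a : A) :
    μ s a = π s a * ∑ a', μ s a' := by
  by_cases h : ∑ a', μ s a' = 0
  · rw [h, mul_zero]
    exact (sum_eq_zero_iff_of_nonneg fun a _ => hμ s a).1 h a (mem_univ a)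
  · rw [hπ s a h, div_mul_cancel₀ _ h]

section MDP

variable {S A : Type*} [Fintype S] [Fintype A]

def stateTransition (P : S → A → S → ℝ) (π : S → A → ℝ) : Matrix S S ℝ :=
  fun s s' => ∑ a, π s a * P s a s'

lemma stateTransition_mem_rowStochastic [DecidableEq S] {P : S → A → S → ℝ} {π : S → A → ℝ}
    (hP : IsKernel P) (hπ : IsPolicy π) : stateTransition P π ∈ rowStochastic ℝ S := by
  refine mem_rowStochastic_iff_sum.2 ⟨fun s s' => ?_, fun s => ?_⟩
  · exact sum_nonneg fun a _ => mul_nonneg ((hπ s).1 a) ((hP s a).1 s')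
  · simp only [stateTransition]
    rw [sum_comm]
    simp only [← mul_sum, (hP s _).2, mul_one, (hπ s).2]

lemma vecMul_stateTransition_apply (P : S → A → S → ℝ) (π : S → A → ℝ) (v : S → ℝ) (s : S) :
    (v ᵥ* stateTransition P π) s = ∑ s', ∑ a', P s' a' s * (π s' a' * v s') := by
  simp only [vecMul, dotProduct, stateTransition, mul_sum]
  exact sum_congr rfl fun s' _ => sum_congr rfl fun a' _ => by ring

lemma saDist_eq_mul_vecMul_pow [DecidableEq S] (P : S → A → S → ℝ) (π : S → A → ℝ)
    (ρ₀ : S → ℝ) (t : ℕ) (s : S) (a : A) :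
    saDist P π ρ₀ t s a = π s a * (ρ₀ ᵥ* stateTransition P π ^ t) s := by
  induction t generalizing s a with
  | zero => simp [saDist, mul_comm]
  | succ t ih =>
    simp only [saDist, ih, pow_succ, ← vecMul_vecMul, vecMul_stateTransition_apply]

lemma occ_eq_mul_tsum [DecidableEq S] (γ : ℝ) (P : S → A → S → ℝ) (π : S → A → ℝ)
    (ρ₀ : S → ℝ) (s : S) (a : A) :
    occ γ P π ρ₀ s a =
      π s a * ∑' t, (1 - γ) * γ ^ t * (ρ₀ ᵥ* stateTransition P π ^ t) s := by
  simp only [occ, saDist_eq_mul_vecMul_pow, ← tsum_mul_left]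
  exact tsum_congr fun t => by ring

lemma IsDist.sum_snd {μ : S → A → ℝ} (hμ : IsDist fun p : S × A => μ p.1 p.2) :
    IsDist fun s => ∑ a, μ s a :=
  ⟨fun s => sum_nonneg fun a _ => hμ.1 (s, a), by rw [← hμ.2, Fintype.sum_prod_type]⟩

lemma InFlow.sum_snd_eq [DecidableEq S] {γ : ℝ} {P : S → A → S → ℝ} {ρ₀ : S → ℝ}
    {μ π : S → A → ℝ} (hμ : InFlow γ P ρ₀ μ)
    (hμπ : ∀ s a, μ s a = π s a * ∑ a', μ s a') :
    (fun s => ∑ a, μ s a) =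
      (1 - γ) • ρ₀ + γ • ((fun s => ∑ a, μ s a) ᵥ* stateTransition P π) := by
  ext s
  simp only [Pi.add_apply, Pi.smul_apply, smul_eq_mul, vecMul_stateTransition_apply,
    ← hμπ, hμ.2 s]

end MDP

theorem stmt3_general {S A : Type*} [Fintype S] [Fintype A]
    (γ : ℝ) (hγ : γ ∈ Set.Ioo (0 : ℝ) 1)
    (P : S → A → S → ℝ) (hP : IsKernel P)
    (ρ0 : S → ℝ) (hρ0 : IsDist ρ0)
    (μ : S → A → ℝ) (hμ : InFlow γ P ρ0 μ)
    (π : S → A → ℝ) (hπ : IsPolicy π)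
    (hcond : ∀ s a, (∑ a', μ s a') ≠ 0 → π s a = μ s a / ∑ a', μ s a') :
    ∀ s a, occ γ P π ρ0 s a = μ s a := by
  classical
  intro s a
  have hμπ := eq_mul_sum_of_eq_div_sum (fun s a => hμ.1.1 (s, a)) hcond
  have hsum := hasSum_of_eq_smul_add_vecMul (stateTransition_mem_rowStochastic hP hπ)
    hγ.1.le hγ.2 hρ0.1 hμ.1.sum_snd (hμ.sum_snd_eq hμπ) s
  rw [occ_eq_mul_tsum, hsum.tsum_eq, ← hμπ]

/-- If `μ` satisfies the Bellman flow constraint and `π(a|s) = μ(s,a)/ρ(s)`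
whenever `ρ(s) = ∑_a μ(s,a) > 0` (arbitrary otherwise), then the discounted
occupancy measure induced by `π` equals `μ`. -/
theorem stmt3 {S A : Type*} [Fintype S] [Fintype A] [Nonempty S] [Nonempty A]
    (γ : ℝ) (hγ : γ ∈ Set.Ioo (0 : ℝ) 1)
    (P : S → A → S → ℝ) (hP : IsKernel P)
    (ρ0 : S → ℝ) (hρ0 : IsDist ρ0)
    (μ : S → A → ℝ) (hμ : InFlow γ P ρ0 μ)
    (π : S → A → ℝ) (hπ : IsPolicy π)
    (hcond : ∀ s a, (∑ a', μ s a') ≠ 0 → π s a = μ s a / ∑ a', μ s a') :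
    ∀ s a, occ γ P π ρ0 s a = μ s a :=
  stmt3_general γ hγ P hP ρ0 hρ0 μ hμ π hπ hcond
end
end

section
/- Let F : Δ_{S×A} → ℝ be differentiable and concave, and define the MFG reward R(·, μ) = ∇F(μ). A policy π is a maximizer of the CURL problem max_π F(μ_π) if and only if π is a Nash equilibrium of this MFG, i.e., its exploitability φ(π) = max_{π'} ⟨μ_{π'}, R(·, μ_π)⟩ − ⟨μ_π, R(·, μ_π)⟩ equals zero. -/
noncomputable section
open scoped BigOperators

open scoped RealInnerProductSpace

/-- The occupancy measure of `π` viewed as a point of Euclidean space `ℝ^{S×A}`. -/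
def occE {S A : Type*} [Fintype S] [Fintype A] (γ : ℝ) (P : S → A → S → ℝ)
    (π : S → A → ℝ) (ρ0 : S → ℝ) : EuclideanSpace ℝ (S × A) :=
  WithLp.toLp 2 (fun p => occ γ P π ρ0 p.1 p.2)

/-- The Bellman flow polytope `M` inside Euclidean space `ℝ^{S×A}`. -/
def MflowE {S A : Type*} [Fintype S] [Fintype A] (γ : ℝ) (P : S → A → S → ℝ)
    (ρ0 : S → ℝ) : Set (EuclideanSpace ℝ (S × A)) :=
  {μ | (∀ p, 0 ≤ μ p) ∧ (∑ p : S × A, μ p = 1) ∧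
    ∀ s, ∑ a, μ (s, a) = (1 - γ) * ρ0 s + γ * ∑ s' : S, ∑ a' : A, P s' a' s * μ (s', a')}

/-! The occupancy map `π ↦ μ_π` sends policies onto the Bellman flow polytope `M`: occupancy
measures satisfy the flow equations, and conversely `μ ∈ M` is the occupancy measure of
`π(a | s) = μ(s, a) / ∑_b μ(s, b)`, because the state marginals of `μ` and of `μ_π` solve the same
discounted flow equation, whose solution is unique as `γ < 1` makes it an `ℓ¹`-contraction.
So `π` maximizes `F(μ_π)` iff `μ_π` maximizes `F` on the convex set `M`. For differentiable
concave `F` this is equivalent to the first-order condition `⟪∇F(μ_π), ν - μ_π⟫ ≤ 0` for all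
`ν ∈ M`, i.e. to no policy `π'` doing better than `π` against the reward `∇F(μ_π)`. -/

section Occupancy

variable {S A : Type*} [Fintype S] [Fintype A] {γ : ℝ} {P : S → A → S → ℝ} {π : S → A → ℝ}
  {ρ0 : S → ℝ}

theorem sum_saDist_zero (hπ : IsPolicy π) (s : S) : ∑ a, saDist P π ρ0 0 s a = ρ0 s := by
  simp only [saDist, ← Finset.mul_sum, (hπ s).2, mul_one]

theorem sum_saDist_succ (hπ : IsPolicy π) (t : ℕ) (s : S) :
    ∑ a, saDist P π ρ0 (t + 1) s a = ∑ s', ∑ a', P s' a' s * saDist P π ρ0 t s' a' := by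
  simp only [saDist, ← Finset.sum_mul, (hπ s).2, one_mul]

theorem saDist_eq_mul_sum (hπ : IsPolicy π) (t : ℕ) (s : S) (a : A) :
    saDist P π ρ0 t s a = π s a * ∑ b, saDist P π ρ0 t s b := by
  cases t with
  | zero => rw [sum_saDist_zero hπ, saDist, mul_comm]
  | succ t => rw [sum_saDist_succ hπ, saDist]

theorem saDist_nonneg (hP : IsKernel P) (hρ0 : IsDist ρ0) (hπ : IsPolicy π) (t : ℕ) (s : S)
    (a : A) : 0 ≤ saDist P π ρ0 t s a := by
  induction t generalizing s a with
  | zero => exact mul_nonneg (hρ0.1 s) ((hπ s).1 a)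
  | succ t ih =>
    exact mul_nonneg ((hπ s).1 a) (Finset.sum_nonneg fun s' _ => Finset.sum_nonneg fun a' _ =>
      mul_nonneg ((hP s' a').1 s) (ih s' a'))

theorem sum_sum_saDist (hP : IsKernel P) (hρ0 : IsDist ρ0) (hπ : IsPolicy π) (t : ℕ) :
    ∑ s, ∑ a, saDist P π ρ0 t s a = 1 := by
  induction t with
  | zero => simp only [sum_saDist_zero hπ, hρ0.2]
  | succ t ih =>
    simp only [sum_saDist_succ hπ]
    rw [Finset.sum_comm, ← ih]
    refine Finset.sum_congr rfl fun s' _ => ?_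
    rw [Finset.sum_comm]
    refine Finset.sum_congr rfl fun a' _ => ?_
    rw [← Finset.sum_mul, (hP s' a').2, one_mul]

theorem saDist_le_one (hP : IsKernel P) (hρ0 : IsDist ρ0) (hπ : IsPolicy π) (t : ℕ) (s : S)
    (a : A) : saDist P π ρ0 t s a ≤ 1 := by
  have hnonneg := saDist_nonneg hP hρ0 hπ t
  calc saDist P π ρ0 t s a ≤ ∑ b, saDist P π ρ0 t s b :=
        Finset.single_le_sum (fun b _ => hnonneg s b) (Finset.mem_univ a)
    _ ≤ ∑ s', ∑ b, saDist P π ρ0 t s' b :=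
        Finset.single_le_sum (f := fun s' => ∑ b, saDist P π ρ0 t s' b)
          (fun s' _ => Finset.sum_nonneg fun b _ => hnonneg s' b) (Finset.mem_univ s)
    _ = 1 := sum_sum_saDist hP hρ0 hπ t

theorem hasSum_occ (hγ : γ ∈ Set.Ioo (0 : ℝ) 1) (hP : IsKernel P) (hρ0 : IsDist ρ0)
    (hπ : IsPolicy π) (s : S) (a : A) :
    HasSum (fun t => (1 - γ) * (γ ^ t * saDist P π ρ0 t s a)) (occ γ P π ρ0 s a) := by
  have hsummable : Summable fun t => γ ^ t * saDist P π ρ0 t s a :=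
    (summable_geometric_of_lt_one hγ.1.le hγ.2).of_nonneg_of_le
      (fun t => mul_nonneg (pow_nonneg hγ.1.le t) (saDist_nonneg hP hρ0 hπ t s a))
      (fun t => mul_le_of_le_one_right (pow_nonneg hγ.1.le t) (saDist_le_one hP hρ0 hπ t s a))
  exact hsummable.hasSum.mul_left (1 - γ)

variable (hγ : γ ∈ Set.Ioo (0 : ℝ) 1) (hP : IsKernel P) (hρ0 : IsDist ρ0) (hπ : IsPolicy π)
include hγ hP hρ0 hπ

theorem occ_nonneg (s : S) (a : A) : 0 ≤ occ γ P π ρ0 s a :=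
  (hasSum_occ hγ hP hρ0 hπ s a).nonneg fun t => mul_nonneg (by linarith [hγ.2])
    (mul_nonneg (pow_nonneg hγ.1.le t) (saDist_nonneg hP hρ0 hπ t s a))

theorem occ_eq_mul_sum (s : S) (a : A) :
    occ γ P π ρ0 s a = π s a * ∑ b, occ γ P π ρ0 s b := by
  refine (hasSum_occ hγ hP hρ0 hπ s a).unique <|
    ((hasSum_sum fun b _ => hasSum_occ hγ hP hρ0 hπ s b).mul_left (π s a)).congr_fun fun t => ?_
  rw [saDist_eq_mul_sum hπ t s a, ← Finset.mul_sum, ← Finset.mul_sum]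
  ring

theorem sum_occ_eq_flow (s : S) :
    ∑ a, occ γ P π ρ0 s a
      = (1 - γ) * ρ0 s + γ * ∑ s', ∑ a', P s' a' s * occ γ P π ρ0 s' a' := by
  set f : ℕ → ℝ := fun t => ∑ a, (1 - γ) * (γ ^ t * saDist P π ρ0 t s a)
  have hsum : HasSum f (∑ a, occ γ P π ρ0 s a) :=
    hasSum_sum fun a _ => hasSum_occ hγ hP hρ0 hπ s a
  have hshift : HasSum (fun t => f (t + 1)) (γ * ∑ s', ∑ a', P s' a' s * occ γ P π ρ0 s' a') := by
    have h := (hasSum_sum fun s' (_ : s' ∈ Finset.univ) =>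
      hasSum_sum fun a' (_ : a' ∈ Finset.univ) =>
        (hasSum_occ hγ hP hρ0 hπ s' a').mul_left (P s' a' s)).mul_left γ
    refine h.congr_fun fun t => ?_
    simp only [f]
    rw [← Finset.mul_sum, ← Finset.mul_sum, sum_saDist_succ hπ]
    simp only [Finset.mul_sum]
    refine Finset.sum_congr rfl fun s' _ => Finset.sum_congr rfl fun a' _ => ?_
    ring
  rw [hsum.unique ((hasSum_nat_add_iff 1).1 hshift)]
  simp only [f, Finset.sum_range_one, pow_zero, one_mul, ← Finset.mul_sum, sum_saDist_zero hπ]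
  ring

theorem sum_occ_total : ∑ s, ∑ a, occ γ P π ρ0 s a = 1 := by
  have hgeom : HasSum (fun t => (1 - γ) * γ ^ t) 1 := by
    simpa [mul_inv_cancel₀ (by linarith [hγ.2] : (1 - γ) ≠ 0)] using
      (hasSum_geometric_of_lt_one hγ.1.le hγ.2).mul_left (1 - γ)
  refine (hasSum_sum fun s _ => hasSum_sum fun a _ => hasSum_occ hγ hP hρ0 hπ s a).unique <|
    hgeom.congr_fun fun t => ?_
  simp only [← Finset.mul_sum, sum_sum_saDist hP hρ0 hπ, mul_one]

end Occupancy

section FlowPolytope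

variable {S A : Type*} [Fintype S] [Fintype A] {γ : ℝ} {P : S → A → S → ℝ} {ρ0 : S → ℝ}

theorem occE_mem_MflowE (hγ : γ ∈ Set.Ioo (0 : ℝ) 1) (hP : IsKernel P) (hρ0 : IsDist ρ0)
    {π : S → A → ℝ} (hπ : IsPolicy π) : occE γ P π ρ0 ∈ MflowE γ P ρ0 :=
  ⟨fun p => occ_nonneg hγ hP hρ0 hπ p.1 p.2,
    by simpa only [occE, Fintype.sum_prod_type] using sum_occ_total hγ hP hρ0 hπ,
    sum_occ_eq_flow hγ hP hρ0 hπ⟩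

theorem MflowE_subset_stdSimplex : MflowE γ P ρ0 ⊆ WithLp.ofLp ⁻¹' stdSimplex ℝ (S × A) :=
  fun _ hμ => ⟨hμ.1, hμ.2.1⟩

theorem convex_MflowE : Convex ℝ (MflowE γ P ρ0) := by
  rintro μ ⟨hμ₀, hμ₁, hμ⟩ ν ⟨hν₀, hν₁, hν⟩ a b ha hb hab
  refine ⟨fun p => ?_, ?_, fun s => ?_⟩
  · simp only [PiLp.add_apply, PiLp.smul_apply, smul_eq_mul]
    exact add_nonneg (mul_nonneg ha (hμ₀ p)) (mul_nonneg hb (hν₀ p))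
  · simp only [PiLp.add_apply, PiLp.smul_apply, smul_eq_mul, Finset.sum_add_distrib,
      ← Finset.mul_sum, hμ₁, hν₁, mul_one, hab]
  · simp only [PiLp.add_apply, PiLp.smul_apply, smul_eq_mul, Finset.sum_add_distrib,
      ← Finset.mul_sum, hμ s, hν s, mul_add, mul_left_comm _ a, mul_left_comm _ b]
    linear_combination (1 - γ) * ρ0 s * hab

theorem eq_zero_of_eq_discount_mul_stochastic {γ : ℝ} (hγ : |γ| < 1) {K : S → S → ℝ}
    (hK₀ : ∀ s' s, 0 ≤ K s' s) (hK₁ : ∀ s', ∑ s, K s' s = 1) {ν : S → ℝ}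
    (hν : ∀ s, ν s = γ * ∑ s', K s' s * ν s') : ν = 0 := by
  have hnorm : ∑ s, |ν s| ≤ |γ| * ∑ s, |ν s| :=
    calc ∑ s, |ν s| = ∑ s, |γ| * |∑ s', K s' s * ν s'| :=
          Finset.sum_congr rfl fun s _ => by rw [hν s, abs_mul]
      _ ≤ ∑ s, |γ| * ∑ s', K s' s * |ν s'| := by
        gcongr with s
        refine (Finset.abs_sum_le_sum_abs _ _).trans_eq ?_
        simp only [abs_mul, abs_of_nonneg (hK₀ _ s)]
      _ = |γ| * ∑ s', |ν s'| := by
        rw [← Finset.mul_sum, Finset.sum_comm]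
        simp only [← Finset.sum_mul, hK₁, one_mul]
  have hzero : ∑ s, |ν s| = 0 := by
    nlinarith [Finset.sum_nonneg fun s (_ : s ∈ Finset.univ) => abs_nonneg (ν s), abs_nonneg γ]
  funext s
  exact abs_eq_zero.1 <|
    (Finset.sum_eq_zero_iff_of_nonneg fun s _ => abs_nonneg (ν s)).1 hzero s (Finset.mem_univ s)

end FlowPolytope

section Realization

variable {S A : Type*} [Fintype A] {π₀ : S → A → ℝ} {μ : EuclideanSpace ℝ (S × A)}

def condPolicy (π₀ : S → A → ℝ) (μ : EuclideanSpace ℝ (S × A)) (s : S) (a : A) : ℝ :=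
  if ∑ b, μ (s, b) = 0 then π₀ s a else μ (s, a) / ∑ b, μ (s, b)

theorem isPolicy_condPolicy (hπ₀ : IsPolicy π₀) (hμ : ∀ p, 0 ≤ μ p) :
    IsPolicy (condPolicy π₀ μ) := by
  intro s
  by_cases hs : ∑ b, μ (s, b) = 0
  · have hπ₀s : condPolicy π₀ μ s = π₀ s := funext fun a => if_pos hs
    exact hπ₀s ▸ hπ₀ s
  · simp only [IsDist, condPolicy, hs, if_false, ← Finset.sum_div, div_self hs, and_true]
    exact fun a => div_nonneg (hμ _) (Finset.sum_nonneg fun b _ => hμ _)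

theorem condPolicy_mul_sum (hμ : ∀ p, 0 ≤ μ p) (s : S) (a : A) :
    condPolicy π₀ μ s a * ∑ b, μ (s, b) = μ (s, a) := by
  by_cases hs : ∑ b, μ (s, b) = 0
  · rw [hs, mul_zero, eq_comm]
    exact (Finset.sum_eq_zero_iff_of_nonneg fun b _ => hμ (s, b)).1 hs a (Finset.mem_univ a)
  · simp only [condPolicy, hs, if_false, div_mul_cancel₀ _ hs]

theorem sum_transition_mul_eq [Fintype S] {P : S → A → S → ℝ} {π : S → A → ℝ} {m : S → A → ℝ}
    (hm : ∀ s a, m s a = π s a * ∑ b, m s b) (s : S) :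
    ∑ s', ∑ a', P s' a' s * m s' a' = ∑ s', (∑ a', P s' a' s * π s' a') * ∑ b, m s' b := by
  refine Finset.sum_congr rfl fun s' _ => ?_
  rw [Finset.sum_mul]
  refine Finset.sum_congr rfl fun a' _ => ?_
  rw [hm s' a', mul_assoc]

theorem occE_condPolicy [Fintype S] {γ : ℝ} {P : S → A → S → ℝ} {ρ0 : S → ℝ}
    (hγ : γ ∈ Set.Ioo (0 : ℝ) 1) (hP : IsKernel P) (hρ0 : IsDist ρ0) (hπ₀ : IsPolicy π₀)
    (hμ : μ ∈ MflowE γ P ρ0) : occE γ P (condPolicy π₀ μ) ρ0 = μ := by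
  obtain ⟨hμ₀, -, hμflow⟩ := hμ
  set π := condPolicy π₀ μ
  have hπ : IsPolicy π := isPolicy_condPolicy hπ₀ hμ₀
  have hμπ : ∀ s a, μ (s, a) = π s a * ∑ b, μ (s, b) := fun s a =>
    (condPolicy_mul_sum hμ₀ s a).symm
  have hoccπ := occ_eq_mul_sum hγ hP hρ0 hπ
  have hstate : (fun s => ∑ b, μ (s, b) - ∑ b, occ γ P π ρ0 s b) = 0 := by
    refine eq_zero_of_eq_discount_mul_stochastic (abs_lt.2 ⟨by linarith [hγ.1], hγ.2⟩)
      (K := fun s' s => ∑ a', P s' a' s * π s' a')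
      (fun s' s => Finset.sum_nonneg fun a' _ => mul_nonneg ((hP s' a').1 s) ((hπ s').1 a'))
      (fun s' => ?_) (fun s => ?_)
    · rw [Finset.sum_comm]
      simp only [← Finset.sum_mul, (hP s' _).2, one_mul, (hπ s').2]
    · rw [hμflow s, sum_occ_eq_flow hγ hP hρ0 hπ s,
        sum_transition_mul_eq (m := fun s a => μ (s, a)) hμπ,
        sum_transition_mul_eq hoccπ]
      simp only [mul_sub, Finset.sum_sub_distrib]
      ring
  ext ⟨s, a⟩
  have hs := congrFun hstate s
  simp only [Pi.zero_apply, sub_eq_zero] at hs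
  rw [occE, PiLp.toLp_apply, hoccπ, ← hs, hμπ s a]

end Realization

section Gradient

variable {E : Type*} [NormedAddCommGroup E] [InnerProductSpace ℝ E] [CompleteSpace E]
  {D : Set E} {f : E → ℝ} {g x y : E}

theorem ConcaveOn.le_add_inner_of_hasGradientAt (hf : ConcaveOn ℝ D f) (hx : x ∈ D) (hy : y ∈ D)
    (hg : HasGradientAt f g x) : f y ≤ f x + ⟪g, y - x⟫ := by
  have hline : HasDerivAt (f ∘ AffineMap.lineMap x y) ⟪g, y - x⟫ (0 : ℝ) := by
    have hg' : HasFDerivAt f (InnerProductSpace.toDual ℝ E g) (AffineMap.lineMap x y (0 : ℝ)) := by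
      simpa using hg.hasFDerivAt
    exact hg'.comp_hasDerivAt (0 : ℝ) AffineMap.hasDerivAt_lineMap
  have hslope := (hf.comp_affineMap (AffineMap.lineMap x y)).slope_le_of_hasDerivAt
    (by simpa using hx) (by simpa using hy) zero_lt_one hline
  simp only [slope_def_field, Function.comp_apply, AffineMap.lineMap_apply_one,
    AffineMap.lineMap_apply_zero, sub_zero, div_one] at hslope
  linarith

theorem IsMaxOn.inner_gradient_sub_nonpos (hD : Convex ℝ D) (hmax : IsMaxOn f D x) (hx : x ∈ D)
    (hy : y ∈ D) (hg : HasGradientAt f g x) : ⟪g, y - x⟫ ≤ 0 :=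
  hmax.localize.hasFDerivWithinAt_nonpos hg.hasFDerivAt.hasFDerivWithinAt
    (sub_mem_posTangentConeAt_of_segment_subset (hD.segment_subset hx hy))

end Gradient

theorem stmt7_general {S A : Type*} [Fintype S] [Fintype A]
    (γ : ℝ) (hγ : γ ∈ Set.Ioo (0 : ℝ) 1)
    (P : S → A → S → ℝ) (hP : IsKernel P)
    (ρ0 : S → ℝ) (hρ0 : IsDist ρ0)
    (F : EuclideanSpace ℝ (S × A) → ℝ)
    (R : EuclideanSpace ℝ (S × A) → EuclideanSpace ℝ (S × A))
    (hF : ConcaveOn ℝ (WithLp.ofLp ⁻¹' stdSimplex ℝ (S × A)) F)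
    (hgrad : ∀ μ ∈ stdSimplex ℝ (S × A), HasGradientAt F (R (WithLp.toLp 2 μ)) (WithLp.toLp 2 μ))
    (π : S → A → ℝ) (hπ : IsPolicy π) :
    (∀ π' : S → A → ℝ, IsPolicy π' → F (occE γ P π' ρ0) ≤ F (occE γ P π ρ0)) ↔
    (∀ π' : S → A → ℝ, IsPolicy π' →
      ⟪occE γ P π' ρ0, R (occE γ P π ρ0)⟫ ≤ ⟪occE γ P π ρ0, R (occE γ P π ρ0)⟫) := by
  set μ := occE γ P π ρ0
  have hμ : μ ∈ MflowE γ P ρ0 := occE_mem_MflowE hγ hP hρ0 hπ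
  have hgradμ : HasGradientAt F (R μ) μ := hgrad _ (MflowE_subset_stdSimplex hμ)
  have hJ : ∀ π', ⟪R μ, occE γ P π' ρ0 - μ⟫ = ⟪occE γ P π' ρ0, R μ⟫ - ⟪μ, R μ⟫ := fun π' => by
    rw [inner_sub_right, real_inner_comm, real_inner_comm μ]
  constructor
  · intro hmax π' hπ'
    have hmaxOn : IsMaxOn F (MflowE γ P ρ0) μ := isMaxOn_iff.2 fun ν hν => by
      simpa only [occE_condPolicy hγ hP hρ0 hπ hν] using hmax _ (isPolicy_condPolicy hπ hν.1)
    have hfirstOrder := hmaxOn.inner_gradient_sub_nonpos convex_MflowE hμ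
      (occE_mem_MflowE hγ hP hρ0 hπ') hgradμ
    linarith [hJ π']
  · intro hnash π' hπ'
    have hconcave := hF.le_add_inner_of_hasGradientAt (MflowE_subset_stdSimplex hμ)
      (MflowE_subset_stdSimplex (occE_mem_MflowE hγ hP hρ0 hπ')) hgradμ
    linarith [hJ π', hnash π' hπ']

/-- CURL maximizers coincide with Nash equilibria of the potential MFG with
reward `R(·,μ) = ∇F(μ)`: a policy `π` maximizes `F(μ_π)` over all policies iff
`J(π', μ_π) = ⟨μ_{π'}, ∇F(μ_π)⟩ ≤ J(π, μ_π)` for every policy `π'`, i.e. the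
exploitability of `π` is zero. -/
theorem stmt7 {S A : Type*} [Fintype S] [Fintype A] [Nonempty S] [Nonempty A]
    (γ : ℝ) (hγ : γ ∈ Set.Ioo (0 : ℝ) 1)
    (P : S → A → S → ℝ) (hP : IsKernel P)
    (ρ0 : S → ℝ) (hρ0 : IsDist ρ0)
    (F : EuclideanSpace ℝ (S × A) → ℝ)
    (R : EuclideanSpace ℝ (S × A) → EuclideanSpace ℝ (S × A))
    (hF : ConcaveOn ℝ (WithLp.ofLp ⁻¹' stdSimplex ℝ (S × A)) F)
    (hgrad : ∀ μ ∈ stdSimplex ℝ (S × A), HasGradientAt F (R (WithLp.toLp 2 μ)) (WithLp.toLp 2 μ))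
    (π : S → A → ℝ) (hπ : IsPolicy π) :
    (∀ π' : S → A → ℝ, IsPolicy π' → F (occE γ P π' ρ0) ≤ F (occE γ P π ρ0)) ↔
    (∀ π' : S → A → ℝ, IsPolicy π' →
      ⟪occE γ P π' ρ0, R (occE γ P π ρ0)⟫ ≤ ⟪occE γ P π ρ0, R (occE γ P π ρ0)⟫) :=
  stmt7_general γ hγ P hP ρ0 hρ0 F R hF hgrad π hπ
end
end
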